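/- Let g be a Lie triple system over a field F with char F ≠ 2, 3 and N : g → g a Nijenhuis operator. Then for all integers k, r > 0 and all x1,x2,x3 ∈ g one has [x1,x2,x3]_{N^{k+r}} = ([·,·,·]_{N^k})_{N^r}(x1,x2,x3), where b_M(x,y,z) := b(Mx,y,z) + b(x,My,z) + b(x,y,Mz) − M(b(x,y,z)) for a trilinear map b and linear map M, [·,·,·]_M is this construction applied to the bracket of g, and ([·,·,·]_{N^k})_{N^r} is the construction applied with the map N^r to the trilinear map [·,·,·]_{N^k}. -/

import Mathlib

/-!
Let `S₁, S₂, S₃` act on maps `g → g → g → g` by precomposing one argument with `N`, and `L` by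
postcomposing with `N`. These operators commute, and `b_{N^k} = (S₁ᵏ + S₂ᵏ + S₃ᵏ - Lᵏ) b =: D_k b`.
The Nijenhuis axioms say exactly that `L² - e₁L + e₂` and `e₃` annihilate the bracket, where `eᵢ`
are the elementary symmetric functions of the `Sᵢ`. Modulo these relations `L` and `D₁ = e₁ - L`
are the two roots of `X² - e₁X + e₂`, which gives `D_k = D₁ᵏ` for `k ≥ 1`, hence `D_r D_k = D_{k+r}`.
This is an identity in the commutative subring these operators generate, taken modulo the
annihilator of the bracket.
-/

/-- `N` is a Nijenhuis operator for the Lie triple system bracket `t`. -/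
def IsNijenhuis {F : Type*} [Field F] {g : Type*} [AddCommGroup g] [Module F g]
    (t : g →ₗ[F] g →ₗ[F] g →ₗ[F] g) (N : Module.End F g) : Prop :=
  (∀ x y z : g, t (N x) (N y) (N z) = 0) ∧
  (∀ x y z : g,
    N (N (t x y z)) =
      N (t (N x) y z) + N (t x (N y) z) + N (t x y (N z)) -
        t (N x) (N y) z - t (N x) y (N z) - t x (N y) (N z))

/-- The deformed trilinear map `b_M(x,y,z) = b(Mx,y,z)+b(x,My,z)+b(x,y,Mz)−M(b(x,y,z))`. -/
def deform {g : Type*} [AddCommGroup g] (b : g → g → g → g) (M : g → g) :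
    g → g → g → g :=
  fun x y z => b (M x) y z + b x (M y) z + b x y (M z) - M (b x y z)

def powSumSubPow {A : Type*} [Ring A] (a b c n : A) (k : ℕ) : A :=
  a ^ k + b ^ k + c ^ k - n ^ k

theorem map_powSumSubPow {A B : Type*} [Ring A] [Ring B] (f : A →+* B) (a b c n : A) (k : ℕ) :
    f (powSumSubPow a b c n k) = powSumSubPow (f a) (f b) (f c) (f n) k := by
  simp only [powSumSubPow, map_sub, map_add, map_pow]

section CommRing

variable {A : Type*} [CommRing A] {a b c n : A}

theorem powSumSubPow_succ_eq_pow
    (hn : n ^ 2 - (a + b + c) * n + (a * b + a * c + b * c) = 0) (habc : a * b * c = 0) :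
    ∀ k : ℕ, powSumSubPow a b c n (k + 1) = powSumSubPow a b c n 1 ^ (k + 1)
  | 0 => (pow_one _).symm
  | 1 => by unfold powSumSubPow; linear_combination (-2 : A) * hn
  | k + 2 => by
    have h₁ := powSumSubPow_succ_eq_pow hn habc (k + 1)
    have h₀ := powSumSubPow_succ_eq_pow hn habc k
    unfold powSumSubPow at *
    -- `xₖ₊₂ = e₁ xₖ₊₁ - e₂ xₖ` holds for the powers of `n` and of `a + b + c - n` by `hn`,
    -- and for the power sums up to `abc (aᵏ + bᵏ + cᵏ)`.
    linear_combination (a + b + c) * h₁ - (a * b + a * c + b * c) * h₀ +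
      (a ^ k + b ^ k + c ^ k) * habc - (n ^ (k + 1) + (a + b + c - n) ^ (k + 1)) * hn

theorem powSumSubPow_mul
    (hn : n ^ 2 - (a + b + c) * n + (a * b + a * c + b * c) = 0) (habc : a * b * c = 0)
    {k r : ℕ} (hk : 0 < k) (hr : 0 < r) :
    powSumSubPow a b c n r * powSumSubPow a b c n k = powSumSubPow a b c n (k + r) := by
  obtain ⟨k, rfl⟩ : ∃ j, k = j + 1 := ⟨k - 1, by omega⟩
  obtain ⟨r, rfl⟩ : ∃ j, r = j + 1 := ⟨r - 1, by omega⟩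
  have h := powSumSubPow_succ_eq_pow hn habc
  rw [h k, h r, show k + 1 + (r + 1) = k + r + 1 + 1 by omega, h (k + r + 1), ← pow_add]
  ring_nf

theorem powSumSubPow_mul_smul {W : Type*} [AddCommGroup W] [Module A W] {t : W}
    (hn : (n ^ 2 - (a + b + c) * n + (a * b + a * c + b * c)) • t = 0)
    (habc : (a * b * c) • t = 0) {k r : ℕ} (hk : 0 < k) (hr : 0 < r) :
    (powSumSubPow a b c n r * powSumSubPow a b c n k) • t = powSumSubPow a b c n (k + r) • t := by
  let π := Ideal.Quotient.mk (LinearMap.ker (LinearMap.toSpanSingleton A W t))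
  have hπ (x : A) : π x = 0 ↔ x • t = 0 := Ideal.Quotient.eq_zero_iff_mem
  have key : π (powSumSubPow a b c n r * powSumSubPow a b c n k) =
      π (powSumSubPow a b c n (k + r)) := by
    simp only [map_mul, map_powSumSubPow]
    refine powSumSubPow_mul ?_ ?_ hk hr
    · simpa only [map_add, map_sub, map_mul, map_pow] using (hπ _).2 hn
    · simpa only [map_mul] using (hπ _).2 habc
  rw [← sub_eq_zero, ← sub_smul, ← hπ, map_sub, key, sub_self]

end CommRing

open scoped IsMulCommutative in
theorem powSumSubPow_mul_smul_of_commute {E W : Type*} [Ring E] [AddCommGroup W] [Module E W]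
    {a b c n : E}
    (hcomm : ∀ x ∈ ({a, b, c, n} : Set E), ∀ y ∈ ({a, b, c, n} : Set E), x * y = y * x)
    {t : W} (hn : (n ^ 2 - (a + b + c) * n + (a * b + a * c + b * c)) • t = 0)
    (habc : (a * b * c) • t = 0) {k r : ℕ} (hk : 0 < k) (hr : 0 < r) :
    (powSumSubPow a b c n r * powSumSubPow a b c n k) • t = powSumSubPow a b c n (k + r) • t := by
  have := Subring.isMulCommutative_closure hcomm
  let S := Subring.closure ({a, b, c, n} : Set E)
  have mem : ∀ x ∈ ({a, b, c, n} : Set E), x ∈ S := fun _ hx => Subring.subset_closure hx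
  let a' : S := ⟨a, mem a (by simp)⟩
  let b' : S := ⟨b, mem b (by simp)⟩
  let c' : S := ⟨c, mem c (by simp)⟩
  let n' : S := ⟨n, mem n (by simp)⟩
  have hcoe (j : ℕ) : ((powSumSubPow a' b' c' n' j : S) : E) = powSumSubPow a b c n j :=
    map_powSumSubPow S.subtype a' b' c' n' j
  have key := powSumSubPow_mul_smul (t := t) (a := a') (b := b') (c := c') (n := n') hn habc hk hr
  rwa [Subring.smul_def, Subring.smul_def, Subring.coe_mul, hcoe, hcoe, hcoe] at key

section Operators

variable {R : Type*} [CommRing R] {g : Type*} [AddCommGroup g] [Module R g]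

def postcomp (M : Module.End R g) : Module.End R (g → g → g → g) where
  toFun b x y z := M (b x y z)
  map_add' _ _ := by ext; simp
  map_smul' _ _ := by ext; simp

def precomp₁ (M : Module.End R g) : Module.End R (g → g → g → g) where
  toFun b x := b (M x)
  map_add' _ _ := rfl
  map_smul' _ _ := rfl

def precomp₂ (M : Module.End R g) : Module.End R (g → g → g → g) where
  toFun b x y := b x (M y)
  map_add' _ _ := rfl
  map_smul' _ _ := rfl

def precomp₃ (M : Module.End R g) : Module.End R (g → g → g → g) where
  toFun b x y z := b x y (M z)
  map_add' _ _ := rfl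
  map_smul' _ _ := rfl

theorem postcomp_pow (M : Module.End R g) : ∀ k : ℕ, postcomp M ^ k = postcomp (M ^ k)
  | 0 => rfl
  | k + 1 => by rw [pow_succ, postcomp_pow M k, pow_succ]; rfl

theorem precomp₁_pow (M : Module.End R g) : ∀ k : ℕ, precomp₁ M ^ k = precomp₁ (M ^ k)
  | 0 => rfl
  | k + 1 => by rw [pow_succ, precomp₁_pow M k, pow_succ']; rfl

theorem precomp₂_pow (M : Module.End R g) : ∀ k : ℕ, precomp₂ M ^ k = precomp₂ (M ^ k)
  | 0 => rfl
  | k + 1 => by rw [pow_succ, precomp₂_pow M k, pow_succ']; rfl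

theorem precomp₃_pow (M : Module.End R g) : ∀ k : ℕ, precomp₃ M ^ k = precomp₃ (M ^ k)
  | 0 => rfl
  | k + 1 => by rw [pow_succ, precomp₃_pow M k, pow_succ']; rfl

theorem deform_pow (b : g → g → g → g) (M : Module.End R g) (k : ℕ) :
    deform b ⇑(M ^ k) =
      powSumSubPow (precomp₁ M) (precomp₂ M) (precomp₃ M) (postcomp M) k b := by
  rw [powSumSubPow, precomp₁_pow, precomp₂_pow, precomp₃_pow, postcomp_pow]
  rfl

theorem precomp_postcomp_pairwise_commute (M : Module.End R g) :
    ∀ x ∈ ({precomp₁ M, precomp₂ M, precomp₃ M, postcomp M} : Set (Module.End R (g → g → g → g))),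
    ∀ y ∈ ({precomp₁ M, precomp₂ M, precomp₃ M, postcomp M} : Set (Module.End R (g → g → g → g))),
      x * y = y * x := by
  simp only [Set.mem_insert_iff, Set.mem_singleton_iff]
  rintro x (rfl | rfl | rfl | rfl) y (rfl | rfl | rfl | rfl) <;> rfl

end Operators

section Nijenhuis

variable {F : Type*} [Field F] {g : Type*} [AddCommGroup g] [Module F g]
  {t : g →ₗ[F] g →ₗ[F] g →ₗ[F] g} {N : Module.End F g}

theorem IsNijenhuis.postcomp_quadratic_apply_eq_zero (hN : IsNijenhuis t N) :
    (postcomp N ^ 2 - (precomp₁ N + precomp₂ N + precomp₃ N) * postcomp N +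
      (precomp₁ N * precomp₂ N + precomp₁ N * precomp₃ N + precomp₂ N * precomp₃ N))
      (fun x y z => t x y z) = 0 := by
  funext x y z
  simp only [pow_two, LinearMap.add_apply, LinearMap.sub_apply, Module.End.mul_apply,
    Pi.add_apply, Pi.sub_apply, Pi.zero_apply, postcomp, precomp₁, precomp₂, precomp₃,
    LinearMap.coe_mk, AddHom.coe_mk]
  rw [hN.2]
  abel

theorem IsNijenhuis.precomp_mul_mul_apply_eq_zero (hN : IsNijenhuis t N) :
    (precomp₁ N * precomp₂ N * precomp₃ N) (fun x y z => t x y z) = 0 :=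
  funext fun x => funext fun y => funext fun z => hN.1 x y z

end Nijenhuis

theorem deform_pow_add_general {F : Type*} [Field F]
    {g : Type*} [AddCommGroup g] [Module F g]
    (t : g →ₗ[F] g →ₗ[F] g →ₗ[F] g)
    (N : Module.End F g) (hN : IsNijenhuis t N) :
    ∀ k r : ℕ, 0 < k → 0 < r → ∀ x1 x2 x3 : g,
      deform (fun x y z => t x y z) (⇑(N ^ (k + r))) x1 x2 x3 =
        deform (deform (fun x y z => t x y z) (⇑(N ^ k))) (⇑(N ^ r)) x1 x2 x3 := by
  intro k r hk hr x1 x2 x3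
  have h := powSumSubPow_mul_smul_of_commute (precomp_postcomp_pairwise_commute N)
    hN.postcomp_quadratic_apply_eq_zero hN.precomp_mul_mul_apply_eq_zero hk hr
  rw [Module.End.smul_def, Module.End.smul_def, Module.End.mul_apply] at h
  rw [deform_pow, deform_pow, deform_pow, h]

theorem deform_pow_add {F : Type*} [Field F]
    (hchar2 : (2 : F) ≠ 0) (hchar3 : (3 : F) ≠ 0)
    {g : Type*} [AddCommGroup g] [Module F g]
    (t : g →ₗ[F] g →ₗ[F] g →ₗ[F] g)
    (hskew : ∀ x y : g, t x x y = 0)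
    (hjac : ∀ x y z : g, t x y z + t y z x + t z x y = 0)
    (hfund : ∀ x y a b c : g,
      t x y (t a b c) = t (t x y a) b c + t a (t x y b) c + t a b (t x y c))
    (N : Module.End F g) (hN : IsNijenhuis t N) :
    ∀ k r : ℕ, 0 < k → 0 < r → ∀ x1 x2 x3 : g,
      deform (fun x y z => t x y z) (⇑(N ^ (k + r))) x1 x2 x3 =
        deform (deform (fun x y z => t x y z) (⇑(N ^ k))) (⇑(N ^ r)) x1 x2 x3 :=
  deform_pow_add_general t N hN
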